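/- arXiv:2105.04347 — 4 statements merged into one kernel-verified Lean document; each statement's English description precedes it below -/
import Mathlib

section
/- Let k be a field of characteristic 2, V a 2n-dimensional k-vector space with basis v_1,...,v_{2n} and alternating form B given by B(v_i, v_{n+i}) = B(v_{n+i}, v_i) = 1 and B(v_i, v_j) = 0 otherwise. Let 0 < l < n/2 and e = E_{l,n+l} + Σ_{i=1}^{n-1} (E_{i,i+1} + E_{n+i+1,n+i}). Then l = min{ m ≥ 0 : B(e^{m+1}(v), e^m(v)) = 0 for all v ∈ V }. In particular, B(e^{l+1}(v), e^l(v)) = 0 for every v ∈ V, while for each j < l there exists v ∈ V with B(e^{j+1}(v), e^j(v)) ≠ 0. -/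
/-!
Write `e = E_{l,n+l} + N`. Each summand `E_{i,i+1} + E_{n+i+1,n+i}` of `N` is of the form
`X + X*` with `X*` the adjoint of `X` for the symmetric form `B`, so in characteristic 2 the
quadratic form `w ↦ B(N w, w)` vanishes and `B(e w, w) = w_{n+l}²`. On the last `n` coordinates
`e` is the shift `(e w)_{n+j} = w_{n+j-1}`, hence `(e^m v)_{n+l}` is `v_{n+l-m}` for `m < l` and
`0` for `m ≥ l`. So `B(e^{m+1} v, e^m v) = ((e^m v)_{n+l})²` vanishes identically exactly when
`m ≥ l`, and `v = (1, …, 1)` is a witness for `m < l`.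
-/

open Matrix Finset

section

variable {k : Type*} [CommSemiring k] {n : ℕ}

lemma Matrix.single_one_mulVec_dotProduct {m : Type*} [Fintype m] [DecidableEq m]
    (a b : m) (w u : m → k) : (single a b 1 *ᵥ w) ⬝ᵥ u = w b * u a := by
  simp [single_mulVec_eq, smul_dotProduct, single_dotProduct]

lemma Matrix.single_one_mulVec_apply {m : Type*} [Fintype m] [DecidableEq m]
    (a b r : m) (w : m → k) : (single a b 1 *ᵥ w) r = if r = a then w b else 0 := by
  simp [single_mulVec, Function.update_apply]

/-- The Gram matrix of `B`. Indices are `0`-based: `v_i` is `Pi.single (i - 1) 1`. -/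
def pairingMatrix (n : ℕ) : Matrix (Fin (2*n)) (Fin (2*n)) k :=
  fun i j => if i.1 + n = j.1 ∨ j.1 + n = i.1 then 1 else 0

lemma pairingMatrix_mulVec_apply {i j : Fin (2*n)} (hij : i.1 + n = j.1 ∨ j.1 + n = i.1)
    (w : Fin (2*n) → k) : (pairingMatrix n *ᵥ w) i = w j := by
  rw [mulVec, dotProduct, Finset.sum_eq_single j]
  · simp [pairingMatrix, hij]
  · intro j' _ hj'
    have : ¬(i.1 + n = j'.1 ∨ j'.1 + n = i.1) := fun h => hj' (Fin.ext (by omega))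
    simp [pairingMatrix, this]
  · simp

/-- `∑_{i=1}^{n-1} (E_{i,i+1} + E_{n+i+1,n+i})`. -/
def shiftMatrix (n : ℕ) : Matrix (Fin (2*n)) (Fin (2*n)) k :=
  ∑ i : Fin (n-1),
    (single ⟨i.1, by omega⟩ ⟨i.1+1, by omega⟩ 1 + single ⟨n+i.1+1, by omega⟩ ⟨n+i.1, by omega⟩ 1)

lemma shiftMatrix_mulVec_dotProduct_self [CharP k 2] (w : Fin (2*n) → k) :
    (shiftMatrix n *ᵥ w) ⬝ᵥ (pairingMatrix n *ᵥ w) = 0 := by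
  rw [shiftMatrix, sum_mulVec, sum_dotProduct]
  refine Finset.sum_eq_zero fun i _ => ?_
  rw [add_mulVec, add_dotProduct, single_one_mulVec_dotProduct, single_one_mulVec_dotProduct,
    pairingMatrix_mulVec_apply (j := ⟨n+i.1, by omega⟩) (by simp; omega),
    pairingMatrix_mulVec_apply (j := ⟨i.1+1, by omega⟩) (by simp; omega), mul_comm]
  exact CharTwo.add_self_eq_zero _

lemma shiftMatrix_mulVec_apply (r : Fin (2*n)) (w : Fin (2*n) → k) :
    (shiftMatrix n *ᵥ w) r = ∑ i : Fin (n-1),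
      ((if r.1 = i.1 then w ⟨i.1+1, by omega⟩ else 0) +
        (if r.1 = n+i.1+1 then w ⟨n+i.1, by omega⟩ else 0)) := by
  simp only [shiftMatrix, sum_mulVec, Finset.sum_apply, add_mulVec, Pi.add_apply,
    single_one_mulVec_apply, Fin.ext_iff]

lemma shiftMatrix_mulVec_apply_of_eq_succ {r s : Fin (2*n)} (hs : n ≤ s.1) (hrs : r.1 = s.1 + 1)
    (w : Fin (2*n) → k) : (shiftMatrix n *ᵥ w) r = w s := by
  rw [shiftMatrix_mulVec_apply, Finset.sum_eq_single ⟨s.1 - n, by omega⟩]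
  · rw [if_neg (by simp; omega), if_pos (by simp; omega), zero_add]
    exact congrArg w (Fin.ext (by simp only; omega))
  · intro i _ hi
    have : i.1 ≠ s.1 - n := fun h => hi (Fin.ext h)
    rw [if_neg (by omega), if_neg (by omega), add_zero]
  · simp

lemma shiftMatrix_mulVec_apply_eq_zero {r : Fin (2*n)} (hr : r.1 = n) (w : Fin (2*n) → k) :
    (shiftMatrix n *ᵥ w) r = 0 := by
  rw [shiftMatrix_mulVec_apply]
  refine Finset.sum_eq_zero fun i _ => ?_
  rw [if_neg (by omega), if_neg (by omega), add_zero]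

/-- For `a = l - 1`, `b = n + l - 1` this is the matrix `e` of the theorem. -/
def shiftMatrixAddSingle (a b : Fin (2*n)) : Matrix (Fin (2*n)) (Fin (2*n)) k :=
  single a b 1 + shiftMatrix n

section ShiftMatrixAddSingle

variable {a b : Fin (2*n)}

lemma shiftMatrixAddSingle_mulVec_dotProduct_self [CharP k 2] (hab : a.1 + n = b.1)
    (w : Fin (2*n) → k) :
    (shiftMatrixAddSingle a b *ᵥ w) ⬝ᵥ (pairingMatrix n *ᵥ w) = w b * w b := by
  rw [shiftMatrixAddSingle, add_mulVec, add_dotProduct, shiftMatrix_mulVec_dotProduct_self,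
    add_zero, single_one_mulVec_dotProduct, pairingMatrix_mulVec_apply (Or.inl hab)]

lemma shiftMatrixAddSingle_mulVec_apply_of_eq_succ (ha : a.1 < n) {r s : Fin (2*n)}
    (hs : n ≤ s.1) (hrs : r.1 = s.1 + 1) (w : Fin (2*n) → k) :
    (shiftMatrixAddSingle a b *ᵥ w) r = w s := by
  rw [shiftMatrixAddSingle, add_mulVec, Pi.add_apply, single_one_mulVec_apply,
    if_neg (by simp [Fin.ext_iff]; omega), zero_add, shiftMatrix_mulVec_apply_of_eq_succ hs hrs]

lemma shiftMatrixAddSingle_mulVec_apply_eq_zero (ha : a.1 < n) {r : Fin (2*n)} (hr : r.1 = n)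
    (w : Fin (2*n) → k) : (shiftMatrixAddSingle a b *ᵥ w) r = 0 := by
  rw [shiftMatrixAddSingle, add_mulVec, Pi.add_apply, single_one_mulVec_apply,
    if_neg (by simp [Fin.ext_iff]; omega), zero_add, shiftMatrix_mulVec_apply_eq_zero hr]

lemma shiftMatrixAddSingle_pow_mulVec_apply_of_eq_add (ha : a.1 < n) (m : ℕ) {r s : Fin (2*n)}
    (hs : n ≤ s.1) (hrs : r.1 = s.1 + m) (v : Fin (2*n) → k) :
    (shiftMatrixAddSingle a b ^ m *ᵥ v) r = v s := by
  induction m generalizing r with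
  | zero => rw [pow_zero, one_mulVec, Fin.ext hrs]
  | succ m ih =>
    rw [pow_succ', ← mulVec_mulVec,
      shiftMatrixAddSingle_mulVec_apply_of_eq_succ ha (s := ⟨r.1 - 1, by omega⟩) (by simp; omega)
        (by simp; omega), ih (by simp; omega)]

lemma shiftMatrixAddSingle_pow_mulVec_apply_eq_zero (ha : a.1 < n) (m : ℕ) {r : Fin (2*n)}
    (hr : n ≤ r.1) (hrm : r.1 < n + m) (v : Fin (2*n) → k) :
    (shiftMatrixAddSingle a b ^ m *ᵥ v) r = 0 := by
  induction m generalizing r with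
  | zero => omega
  | succ m ih =>
    rw [pow_succ', ← mulVec_mulVec]
    rcases (show r.1 = n ∨ n < r.1 by omega) with hr' | hr'
    · exact shiftMatrixAddSingle_mulVec_apply_eq_zero ha hr' _
    · rw [shiftMatrixAddSingle_mulVec_apply_of_eq_succ ha (s := ⟨r.1 - 1, by omega⟩)
        (by simp; omega) (by simp; omega), ih (by simp; omega) (by simp; omega)]

end ShiftMatrixAddSingle

end

theorem stmt_2 (k : Type*) [Field k] [CharP k 2] (n l : ℕ)
    (hl0 : 0 < l) (hln : 2*l < n) :
    let B : (Fin (2*n) → k) → (Fin (2*n) → k) → k := fun v w =>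
      v ⬝ᵥ ((fun i j : Fin (2*n) => if i.1 + n = j.1 ∨ j.1 + n = i.1 then (1:k) else 0) *ᵥ w)
    let e : Matrix (Fin (2*n)) (Fin (2*n)) k :=
      Matrix.single ⟨l-1, by omega⟩ ⟨n+l-1, by omega⟩ 1 +
      ∑ i : Fin (n-1),
        (Matrix.single ⟨i.1, by have := i.2; omega⟩ ⟨i.1+1, by have := i.2; omega⟩ 1 +
         Matrix.single ⟨n+i.1+1, by have := i.2; omega⟩ ⟨n+i.1, by have := i.2; omega⟩ 1)
    IsLeast {m : ℕ | ∀ v : Fin (2*n) → k, B ((e ^ (m+1)) *ᵥ v) ((e ^ m) *ᵥ v) = 0} l ∧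
    (∀ v : Fin (2*n) → k, B ((e ^ (l+1)) *ᵥ v) ((e ^ l) *ᵥ v) = 0) ∧
    (∀ j < l, ∃ v : Fin (2*n) → k, B ((e ^ (j+1)) *ᵥ v) ((e ^ j) *ᵥ v) ≠ 0) := by
  intro B e
  have he : e = shiftMatrixAddSingle ⟨l-1, by omega⟩ ⟨n+l-1, by omega⟩ := rfl
  have ha : l - 1 < n := by omega
  have hB : ∀ m v, B (e ^ (m+1) *ᵥ v) (e ^ m *ᵥ v) = (e ^ m *ᵥ v) ⟨n+l-1, by omega⟩ ^ 2 :=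
    fun m v => by
      rw [pow_succ', ← mulVec_mulVec, sq]
      exact shiftMatrixAddSingle_mulVec_dotProduct_self (by simp; omega) _
  have hvanish : ∀ m, l ≤ m → ∀ v, B (e ^ (m+1) *ᵥ v) (e ^ m *ᵥ v) = 0 := fun m hm v => by
    rw [hB, he, shiftMatrixAddSingle_pow_mulVec_apply_eq_zero ha m (by simp; omega)
      (by simp; omega), zero_pow two_ne_zero]
  have hones : ∀ m < l, B (e ^ (m+1) *ᵥ fun _ => 1) (e ^ m *ᵥ fun _ => 1) ≠ 0 := fun m hm => by
    rw [hB, he, shiftMatrixAddSingle_pow_mulVec_apply_of_eq_add ha m (s := ⟨n+l-1-m, by omega⟩)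
      (by simp; omega) (by simp; omega), one_pow]
    exact one_ne_zero
  exact ⟨⟨hvanish l le_rfl, fun m hm => not_lt.1 fun hlt => hones m hlt (hm _)⟩,
    hvanish l le_rfl, fun j hj => ⟨_, hones j hj⟩⟩
end

section
/- Let k be a field of characteristic 2, n ≥ 4, and V a 2n-dimensional k-vector space with basis v_1,...,v_{2n}. Fix l with (n+1)/2 < l ≤ n and let u be the endomorphism of V determined by: u(v_i) = v_i + v_{i-1} + ... + v_1 for 1 ≤ i ≤ n; u(v_j) = v_j + v_{j+1} for n+1 ≤ j < 2n with j ≠ 2l-1; u(v_{2l-1}) = v_{2l-1} + v_{2l} + v_n + v_{n-1} + ... + v_1; and u(v_{2n}) = v_{2n} + v_{2l-n-1} + v_{2l-n-2} + ... + v_1. Then u is invertible, the fixed-point space of u is the 2-dimensional subspace spanned by v_1 and v_{2l-n} + v_{2n}, and (u - 1)^{2l-2} = 0 while (u - 1)^{2l-3} ≠ 0. Consequently, u is unipotent with exactly two Jordan blocks, of sizes 2l - 2 and 2n - 2l + 2. -/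
/-!
Write `N = u - 1` and `e j` for the basis vector `v (j+1)`. On `e 0, …, e (n-1)` the map `N` is
the strictly upper triangular all-ones matrix, `N (e j) = e 0 + ⋯ + e (j-1)`, hence
`N ^ j (e 0 + ⋯ + e j) = e 0` and `N ^ j (e 0 + ⋯ + e (j+1)) = e 1 + (j+1) • e 0`.
On the other basis vectors `N` is the shift `e j ↦ e (j+1)`, except that `N (e (2l-2))` also
contains `e 0 + ⋯ + e (n-1)` and `N (e (2n-1)) = e 0 + ⋯ + e (2l-n-2)`. Following `e n` once around
gives `N ^ (2l-2) (e n) = e 0 + e 0 = 0`, while the `e 0`-coordinate of `N ^ (2l-3) (e n)` is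
`2l-3`, which is odd. Each `e (j+1)` with `n ≤ j` is `N (e j)` up to a vector of the first block,
so `N ^ (2l-2)` vanishes on all basis vectors. The kernel is read off coordinatewise: the
coordinates `n+1, …, 2n-1` of `N x` are those of `x` shifted, and consecutive differences of the
first `n` give the rest.
-/

open Matrix Finset

section StrictSuffixSum

variable {R M : Type*} [Semiring R] [AddCommMonoid M] [Module R M] (f : Module.End R M)
  {e : ℕ → M}

theorem Module.End.pow_apply_of_chain {a r : ℕ}
    (h : ∀ j, a ≤ j → j < a + r → f (e j) = e (j + 1)) : (f ^ r) (e a) = e (a + r) := by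
  induction r with
  | zero => rfl
  | succ r ih =>
    rw [pow_succ', Module.End.mul_apply, ih fun j hj hjr => h j hj (by omega),
      h _ (Nat.le_add_right a r) (by omega), add_assoc]

variable {f} {n : ℕ} (hf : ∀ j < n, f (e j) = ∑ i ∈ range j, e i)
include hf

theorem Module.End.pow_apply_sum_range_succ {j : ℕ} (hj : j < n) :
    (f ^ j) (∑ i ∈ range (j + 1), e i) = e 0 := by
  induction j with
  | zero => simp
  | succ j ih =>
    have hlow : (f ^ (j + 1)) (∑ i ∈ range (j + 1), e i) = 0 := by
      rw [pow_succ', Module.End.mul_apply, ih (by omega), hf 0 (by omega), sum_range_zero]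
    have htop : (f ^ (j + 1)) (e (j + 1)) = e 0 := by
      rw [pow_succ, Module.End.mul_apply, hf _ hj, ih (by omega)]
    rw [sum_range_succ, map_add, hlow, htop, zero_add]

theorem Module.End.pow_apply_sum_range_self {j : ℕ} (hj : j ≤ n) :
    (f ^ j) (∑ i ∈ range j, e i) = 0 := by
  cases j with
  | zero => simp
  | succ j =>
    rw [pow_succ', Module.End.mul_apply, pow_apply_sum_range_succ hf (by omega), hf 0 (by omega),
      sum_range_zero]

theorem Module.End.pow_apply_eq_zero_of_lt {i r : ℕ} (hi : i < n) (hr : i < r) :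
    (f ^ r) (e i) = 0 := by
  obtain ⟨d, rfl⟩ := Nat.exists_eq_add_of_le hr
  rw [add_comm, pow_add, pow_succ, Module.End.mul_apply, Module.End.mul_apply, hf i hi,
    pow_apply_sum_range_self hf hi.le, map_zero]

theorem Module.End.pow_apply_sum_range_add_two {j : ℕ} (hj : j + 2 ≤ n) :
    (f ^ j) (∑ i ∈ range (j + 2), e i) = e 1 + (j + 1) • e 0 := by
  induction j with
  | zero => simp [sum_range_succ, add_comm]
  | succ j ih =>
    rw [sum_range_succ, map_add, pow_apply_sum_range_succ hf (by omega), pow_succ,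
      Module.End.mul_apply, hf _ (by omega), ih (by omega)]
    simp only [add_nsmul, one_nsmul]
    abel

end StrictSuffixSum

namespace UnipotentTwoBlocks

variable (k : Type*) [CommRing k]

-- Column `j` holds the coordinates of `u (v (j+1))`.
def U (n l : ℕ) : Matrix (Fin (2*n)) (Fin (2*n)) k := fun i j =>
  if j.1 < n then (if i.1 ≤ j.1 then 1 else 0)
  else if j.1 = 2*l-2 then (if i.1 = 2*l-2 ∨ i.1 = 2*l-1 ∨ i.1 < n then 1 else 0)
  else if j.1 = 2*n-1 then (if i.1 = 2*n-1 ∨ i.1 ≤ 2*l-n-2 then 1 else 0)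
  else (if i = j ∨ i.1 = j.1+1 then 1 else 0)

def N (n l : ℕ) : Module.End k (Fin (2*n) → k) := toLin' (U k n l - 1)

/-- Indexed by `ℕ` so that no bound proofs are carried around; it is `0` for `j ≥ m`. -/
def basisVec (m j : ℕ) : Fin m → k := fun t => if t.1 = j then 1 else 0

variable {k}

theorem basisVec_eq_single {m j : ℕ} (hj : j < m) : basisVec k m j = Pi.single ⟨j, hj⟩ 1 := by
  funext t
  simp [basisVec, Pi.single_apply, Fin.ext_iff]

theorem sum_range_basisVec (m j : ℕ) :
    ∑ i ∈ range j, basisVec k m i = fun t => if t.1 < j then 1 else 0 := by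
  funext t
  simp [basisVec, Finset.sum_apply]

theorem toLin'_basisVec {m j : ℕ} (M : Matrix (Fin m) (Fin m) k) (hj : j < m) :
    toLin' M (basisVec k m j) = fun i => M i ⟨j, hj⟩ := by
  rw [toLin'_apply, basisVec_eq_single hj, mulVec_single_one]
  rfl

variable {n l : ℕ}

theorem N_basisVec_of_lt :
    ∀ j < n, N k n l (basisVec k (2*n) j) = ∑ i ∈ range j, basisVec k (2*n) i := by
  intro j hj
  rw [N, toLin'_basisVec _ (by omega), sum_range_basisVec]
  funext t
  simp only [Matrix.sub_apply, one_apply, U, Fin.ext_iff]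
  split_ifs <;> first | omega | simp

theorem N_basisVec_of_le {j : ℕ} (hj : n ≤ j) (hj' : j + 1 < 2*n) (hjl : j ≠ 2*l-2) :
    N k n l (basisVec k (2*n) j) = basisVec k (2*n) (j + 1) := by
  rw [N, toLin'_basisVec _ (by omega)]
  funext t
  simp only [Matrix.sub_apply, one_apply, U, basisVec, Fin.ext_iff]
  split_ifs <;> first | omega | simp

theorem N_apply_sub_N_apply_succ (x : Fin (2*n) → k) {i : ℕ} (hi : i + 1 < n) :
    N k n l x ⟨i, by omega⟩ - N k n l x ⟨i + 1, by omega⟩ =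
      x ⟨i + 1, by omega⟩ + if i = 2*l-n-2 then x ⟨2*n-1, by omega⟩ else 0 := by
  have hrow :
      (fun t => (U k n l - 1) ⟨i, by omega⟩ t) - (fun t => (U k n l - 1) ⟨i + 1, by omega⟩ t) =
      Pi.single ⟨i + 1, by omega⟩ 1 +
        Pi.single ⟨2*n-1, by omega⟩ (if i = 2*l-n-2 then 1 else 0) := by
    funext t
    simp only [Pi.sub_apply, Pi.add_apply, Matrix.sub_apply, one_apply, U, Pi.single_apply,
      Fin.ext_iff]
    split_ifs <;> first | omega | simp
  simp only [N, toLin'_apply, mulVec]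
  rw [← sub_dotProduct, hrow, add_dotProduct, single_one_dotProduct, single_dotProduct, ite_mul,
    one_mul, zero_mul]

theorem N_apply_succ_of_le (hl2 : l ≤ n) (x : Fin (2*n) → k) {i : ℕ} (hi : n ≤ i) (hi' : i + 1 < 2*n) :
    N k n l x ⟨i + 1, hi'⟩ = x ⟨i, by omega⟩ := by
  have hrow : (fun t => (U k n l - 1) ⟨i + 1, hi'⟩ t) = Pi.single ⟨i, by omega⟩ 1 := by
    funext t
    simp only [Matrix.sub_apply, one_apply, U, Pi.single_apply, Fin.ext_iff]
    split_ifs <;> first | omega | simp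
  simp only [N, toLin'_apply, mulVec]
  rw [hrow, single_one_dotProduct]

variable (hl1 : n + 1 < 2*l) (hl2 : l ≤ n)
include hl1 hl2

theorem N_basisVec_two_mul_sub_two :
    N k n l (basisVec k (2*n) (2*l-2)) =
      basisVec k (2*n) (2*l-1) + ∑ i ∈ range n, basisVec k (2*n) i := by
  rw [N, toLin'_basisVec _ (by omega), sum_range_basisVec]
  funext t
  simp only [Matrix.sub_apply, one_apply, U, basisVec, Pi.add_apply, Fin.ext_iff]
  split_ifs <;> first | omega | simp

theorem N_basisVec_last :
    N k n l (basisVec k (2*n) (2*n-1)) = ∑ i ∈ range (2*l-n-1), basisVec k (2*n) i := by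
  rw [N, toLin'_basisVec _ (by omega), sum_range_basisVec]
  funext t
  simp only [Matrix.sub_apply, one_apply, U, Fin.ext_iff]
  split_ifs <;> first | omega | simp

theorem N_pow_sub_one_basisVec_n :
    (N k n l ^ (n-1)) (basisVec k (2*n) n) =
      basisVec k (2*n) (2*n-1) + (N k n l ^ (2*n-2*l)) (∑ i ∈ range n, basisVec k (2*n) i) := by
  have hfirst := (N k n l).pow_apply_of_chain (e := basisVec k (2*n)) (a := n) (r := 2*l-2-n)
    fun j hj _ => N_basisVec_of_le hj (by omega) (by omega)
  have hsecond := (N k n l).pow_apply_of_chain (e := basisVec k (2*n)) (a := 2*l-1)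
    (r := 2*n-2*l) fun j hj _ => N_basisVec_of_le (by omega) (by omega) (by omega)
  rw [show n + (2*l-2-n) = 2*l-2 by omega] at hfirst
  rw [show 2*l-1 + (2*n-2*l) = 2*n-1 by omega] at hsecond
  rw [show n - 1 = 2*n-2*l + 1 + (2*l-2-n) by omega, pow_add, pow_succ, Module.End.mul_apply,
    Module.End.mul_apply, hfirst, N_basisVec_two_mul_sub_two hl1 hl2, map_add, hsecond]

theorem N_pow_basisVec_n :
    (N k n l ^ n) (basisVec k (2*n) n) =
      ∑ i ∈ range (2*l-n-1), basisVec k (2*n) i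
        + (N k n l ^ (2*n-2*l+1)) (∑ i ∈ range n, basisVec k (2*n) i) := by
  have h := congrArg (N k n l) (N_pow_sub_one_basisVec_n hl1 hl2)
  rwa [← Module.End.mul_apply, ← pow_succ', Nat.sub_add_cancel (by omega), map_add,
    N_basisVec_last hl1 hl2, ← Module.End.mul_apply, ← pow_succ'] at h

theorem N_pow_two_mul_sub_two_basisVec_n [CharP k 2] :
    (N k n l ^ (2*l-2)) (basisVec k (2*n) n) = 0 := by
  have hf := N_basisVec_of_lt (k := k) (n := n) (l := l)
  have h1 := Module.End.pow_apply_sum_range_succ hf (j := 2*l-n-2) (by omega)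
  have h2 := Module.End.pow_apply_sum_range_succ hf (j := n-1) (by omega)
  rw [show 2*l-n-2+1 = 2*l-n-1 by omega] at h1
  rw [Nat.sub_add_cancel (by omega)] at h2
  rw [show 2*l-2 = 2*l-n-2 + n by omega, pow_add, Module.End.mul_apply,
    N_pow_basisVec_n hl1 hl2, map_add, h1, ← Module.End.mul_apply, ← pow_add,
    show 2*l-n-2 + (2*n-2*l+1) = n-1 by omega, h2]
  funext t
  exact CharTwo.add_self_eq_zero _

theorem N_pow_two_mul_sub_three_basisVec_n_ne_zero [CharP k 2] :
    (N k n l ^ (2*l-3)) (basisVec k (2*n) n) ≠ 0 := by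
  have hcoord : (N k n l ^ (2*l-3)) (basisVec k (2*n) n) ⟨0, by omega⟩ = ((2*l-3 : ℕ) : k) := by
    have hf := N_basisVec_of_lt (k := k) (n := n) (l := l)
    have h2 := Module.End.pow_apply_sum_range_add_two hf (j := n-2) (by omega)
    rw [show n-2+2 = n by omega] at h2
    -- If `2*l = n+2`, then `2*l-3 = n-1` falls short of one full turn around `e n`.
    rcases Nat.lt_or_ge (n+2) (2*l) with hm | hm
    · have h1 := Module.End.pow_apply_sum_range_add_two hf (j := 2*l-n-3) (by omega)
      rw [show 2*l-n-3+2 = 2*l-n-1 by omega] at h1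
      rw [show 2*l-3 = 2*l-n-3 + n by omega, pow_add, Module.End.mul_apply,
        N_pow_basisVec_n hl1 hl2, map_add, h1, ← Module.End.mul_apply, ← pow_add,
        show 2*l-n-3 + (2*n-2*l+1) = n-2 by omega, h2]
      simp [basisVec]
      norm_cast
      congr 1
      omega
    · rw [show 2*l-3 = n-1 by omega, N_pow_sub_one_basisVec_n hl1 hl2,
        show 2*n-2*l = n-2 by omega, h2]
      simp [basisVec, if_neg (show 0 ≠ 2*n-1 by omega)]
      norm_cast
      congr 1
      omega
  intro h
  rw [h, Pi.zero_apply, eq_comm, CharP.cast_eq_zero_iff k 2] at hcoord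
  omega

theorem N_pow_two_mul_sub_two [CharP k 2] : N k n l ^ (2*l-2) = 0 := by
  have hf := N_basisVec_of_lt (k := k) (n := n) (l := l)
  have hlow : ∀ j < n, (N k n l ^ (2*l-2)) (basisVec k (2*n) j) = 0 := fun j hj =>
    Module.End.pow_apply_eq_zero_of_lt hf hj (by omega)
  have hhigh : ∀ j, n ≤ j → j < 2*n → (N k n l ^ (2*l-2)) (basisVec k (2*n) j) = 0 := by
    intro j hj
    induction j, hj using Nat.le_induction with
    | base => exact fun _ => N_pow_two_mul_sub_two_basisVec_n hl1 hl2
    | succ j hj ih =>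
      intro hj'
      have hQ : (N k n l ^ (2*l-2)) (N k n l (basisVec k (2*n) j)) = 0 := by
        rw [← Module.End.mul_apply, ← pow_succ, pow_succ', Module.End.mul_apply, ih (by omega),
          map_zero]
      by_cases hjl : j = 2*l-2
      · rw [hjl, N_basisVec_two_mul_sub_two hl1 hl2, map_add, map_sum,
          sum_eq_zero fun i hi => hlow i (mem_range.1 hi), add_zero] at hQ
        rwa [hjl, show 2*l-2+1 = 2*l-1 by omega]
      · rwa [N_basisVec_of_le hj (by omega) hjl] at hQ
  refine (Pi.basisFun k (Fin (2*n))).ext fun j => ?_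
  rw [Pi.basisFun_apply, ← basisVec_eq_single j.2, LinearMap.zero_apply]
  rcases Nat.lt_or_ge j.1 n with h | h
  exacts [hlow _ h, hhigh _ h j.2]

theorem ker_N [CharP k 2] :
    LinearMap.ker (N k n l) = Submodule.span k
      {basisVec k (2*n) 0, basisVec k (2*n) (2*l-n-1) + basisVec k (2*n) (2*n-1)} := by
  apply le_antisymm
  · intro x hx
    rw [LinearMap.mem_ker] at hx
    rw [Submodule.mem_span_pair]
    refine ⟨x ⟨0, by omega⟩, x ⟨2*n-1, by omega⟩, ?_⟩
    funext ⟨t, ht⟩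
    simp only [Pi.add_apply, Pi.smul_apply, smul_eq_mul, basisVec]
    rcases Nat.lt_or_ge t n with htn | htn
    · cases t with
      | zero => simp [show 0 ≠ 2*l-n-1 by omega, show 0 ≠ 2*n-1 by omega]
      | succ t =>
        have h := N_apply_sub_N_apply_succ (l := l) x (i := t) (by omega)
        rw [hx, Pi.zero_apply, Pi.zero_apply, sub_self, eq_comm, CharTwo.add_eq_zero] at h
        rw [h, if_neg (show t + 1 ≠ 0 by omega), if_neg (show t + 1 ≠ 2*n-1 by omega)]
        by_cases hm : t = 2*l-n-2
        · rw [if_pos hm, if_pos (show t + 1 = 2*l-n-1 by omega)]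
          simp
        · rw [if_neg hm, if_neg (show t + 1 ≠ 2*l-n-1 by omega)]
          simp
    · by_cases hlast : t = 2*n-1
      · subst hlast
        simp [show 2*n-1 ≠ 2*l-n-1 by omega, show 2*n-1 ≠ 0 by omega]
      · have h := N_apply_succ_of_le hl2 x (i := t) htn (by omega)
        rw [hx] at h
        simp [hlast, show t ≠ 0 by omega, show t ≠ 2*l-n-1 by omega, ← h]
  · rw [Submodule.span_le]
    rintro y (rfl | rfl)
    · exact (N_basisVec_of_lt _ (by omega)).trans (sum_range_zero _)
    · rw [SetLike.mem_coe, LinearMap.mem_ker, map_add, N_basisVec_of_lt _ (by omega),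
        N_basisVec_last hl1 hl2]
      funext t
      exact CharTwo.add_self_eq_zero _

theorem finrank_ker_N [CharP k 2] [Nontrivial k] :
    Module.finrank k (LinearMap.ker (N k n l)) = 2 := by
  have hli : LinearIndependent k
      ![basisVec k (2*n) 0, basisVec k (2*n) (2*l-n-1) + basisVec k (2*n) (2*n-1)] := by
    rw [LinearIndependent.pair_iff]
    intro s t hst
    exact ⟨by simpa [basisVec, show 0 ≠ 2*l-n-1 by omega, show 0 ≠ 2*n-1 by omega] using
        congrFun hst ⟨0, by omega⟩,
      by simpa [basisVec, show 2*n-1 ≠ 0 by omega, show 2*n-1 ≠ 2*l-n-1 by omega] using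
        congrFun hst ⟨2*n-1, by omega⟩⟩
  rw [ker_N hl1 hl2, ← range_cons_cons_empty _ _ ![], finrank_span_eq_card hli, Fintype.card_fin]

theorem U_sub_one_pow_two_mul_sub_two [CharP k 2] : (U k n l - 1) ^ (2*l-2) = 0 := by
  rw [← toLin'.map_eq_zero_iff, toLin'_pow]
  exact N_pow_two_mul_sub_two hl1 hl2

theorem U_sub_one_pow_two_mul_sub_three_ne_zero [CharP k 2] : (U k n l - 1) ^ (2*l-3) ≠ 0 := by
  intro h
  apply N_pow_two_mul_sub_three_basisVec_n_ne_zero (k := k) hl1 hl2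
  rw [N, ← toLin'_pow, h, map_zero, LinearMap.zero_apply]

theorem isUnit_U [CharP k 2] : IsUnit (U k n l) := by
  simpa using (show IsNilpotent (U k n l - 1) from
    ⟨_, U_sub_one_pow_two_mul_sub_two hl1 hl2⟩).isUnit_one_add

end UnipotentTwoBlocks

open UnipotentTwoBlocks

theorem stmt_5 (k : Type*) [Field k] [CharP k 2] (n l : ℕ)
    (hl1 : n + 1 < 2*l) (hl2 : l ≤ n) :
    let v : Fin (2*n) → (Fin (2*n) → k) := fun i => Pi.single i 1
    let U : Matrix (Fin (2*n)) (Fin (2*n)) k := fun i j =>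
      if j.1 < n then (if i.1 ≤ j.1 then 1 else 0)
      else if j.1 = 2*l-2 then (if i.1 = 2*l-2 ∨ i.1 = 2*l-1 ∨ i.1 < n then 1 else 0)
      else if j.1 = 2*n-1 then (if i.1 = 2*n-1 ∨ i.1 ≤ 2*l-n-2 then 1 else 0)
      else (if i = j ∨ i.1 = j.1+1 then 1 else 0)
    IsUnit U ∧
    LinearMap.ker (U - 1).mulVecLin =
      Submodule.span k {v ⟨0, by omega⟩, v ⟨2*l-n-1, by omega⟩ + v ⟨2*n-1, by omega⟩} ∧
    Module.finrank k (LinearMap.ker (U - 1).mulVecLin) = 2 ∧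
    (U - 1) ^ (2*l-2) = 0 ∧
    (U - 1) ^ (2*l-3) ≠ 0 := by
  intro v U
  have hv : ∀ j (hj : j < 2*n), v ⟨j, hj⟩ = basisVec k (2*n) j :=
    fun j hj => (basisVec_eq_single hj).symm
  refine ⟨isUnit_U hl1 hl2, ?_, finrank_ker_N hl1 hl2, U_sub_one_pow_two_mul_sub_two hl1 hl2,
    U_sub_one_pow_two_mul_sub_three_ne_zero hl1 hl2⟩
  rw [hv, hv, hv]
  exact ker_N hl1 hl2
end

section
/- Let k be a field of characteristic 2 and V a 4-dimensional k-vector space with basis v_1, v_2, v_3, v_4 and alternating form B with B(v_1,v_3) = B(v_3,v_1) = B(v_2,v_4) = B(v_4,v_2) = 1 and zero otherwise. Let e = E_{1,3} + E_{1,2} + E_{4,3} (i.e. e(v_2) = v_1, e(v_3) = v_1 + v_4, and e(v_1) = e(v_4) = 0). Then e ∈ sp(V,B), e^2 = 0, e has rank 2 (two Jordan blocks of size 2), and B(e(v_3), v_3) = 1 while B(e^2(v), e(v)) = 0 for all v ∈ V. -/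
/-!
In characteristic 2 a matrix is skew-adjoint for a symmetric Gram matrix `J` exactly when `J * e`
is symmetric, which is checked entrywise. Since `e` maps `v₂, v₃` into `span {v₁, v₄}` and kills
`v₁, v₄`, it squares to zero; so its range lies in its kernel and its rank is at most `4 / 2 = 2`,
while the invertible `2 × 2` minor on rows `v₁, v₄` and columns `v₂, v₃` gives rank at least 2.
-/

open Matrix

theorem Matrix.IsSkewAdjoint.dotProduct_mulVec_add_dotProduct_mulVec {n R : Type*} [Fintype n]
    [CommRing R] {J A : Matrix n n R} (h : J.IsSkewAdjoint A) (v w : n → R) :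
    (A *ᵥ v) ⬝ᵥ (J *ᵥ w) + v ⬝ᵥ (J *ᵥ (A *ᵥ w)) = 0 := by
  have h' : Aᵀ * J = -(J * A) := by rw [← mul_neg]; exact h
  rw [← vecMul_transpose, ← dotProduct_mulVec, mulVec_mulVec, h', neg_mulVec, mulVec_mulVec,
    dotProduct_neg, neg_add_cancel]

theorem Matrix.isSkewAdjoint_of_isSymm_of_isSymm_mul {n R : Type*} [Fintype n] [CommRing R]
    [CharP R 2] {J A : Matrix n n R} (hJ : J.IsSymm) (hJA : (J * A).IsSymm) :
    J.IsSkewAdjoint A := by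
  have : Aᵀ * J = J * A := by rw [← hJA.eq, transpose_mul, hJ.eq]
  rw [Matrix.IsSkewAdjoint, Matrix.IsAdjointPair, this, mul_neg]
  ext i j
  exact (CharTwo.neg_eq _).symm

theorem Matrix.two_mul_rank_le_of_sq_eq_zero {n K : Type*} [Fintype n] [DecidableEq n] [Field K]
    {A : Matrix n n K} (h : A ^ 2 = 0) : 2 * A.rank ≤ Fintype.card n := by
  have hle : LinearMap.range A.mulVecLin ≤ LinearMap.ker A.mulVecLin := by
    rintro _ ⟨x, rfl⟩
    simp [mulVec_mulVec, ← sq, h]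
  have := Submodule.finrank_mono hle
  have := LinearMap.finrank_range_add_finrank_ker A.mulVecLin
  rw [Module.finrank_fintype_fun_eq_card] at this
  rw [Matrix.rank]
  omega

theorem Matrix.card_le_rank_of_isUnit_submatrix {m n o K : Type*} [Fintype n] [Fintype o]
    [DecidableEq o] [Field K] (A : Matrix m n K) (r : o → m) (c : o → n)
    (h : IsUnit (A.submatrix r c)) : Fintype.card o ≤ A.rank :=
  (rank_of_isUnit _ h).symm.trans_le (rank_submatrix_le A r c)

theorem stmt_16 (k : Type*) [Field k] [CharP k 2] :
    let B : (Fin 4 → k) → (Fin 4 → k) → k := fun v w =>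
      v ⬝ᵥ ((fun i j : Fin 4 => if i.1 + 2 = j.1 ∨ j.1 + 2 = i.1 then (1:k) else 0) *ᵥ w)
    let e : Matrix (Fin 4) (Fin 4) k :=
      single 0 2 1 + single 0 1 1 + single 3 2 1
    (∀ v w : Fin 4 → k, B (e *ᵥ v) w + B v (e *ᵥ w) = 0) ∧
    e ^ 2 = 0 ∧
    e.rank = 2 ∧
    B (e *ᵥ (Pi.single 2 1)) (Pi.single 2 1) = 1 ∧
    (∀ v : Fin 4 → k, B ((e ^ 2) *ᵥ v) (e *ᵥ v) = 0) := by
  intro B e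
  have hJ : (fun i j : Fin 4 => if i.1 + 2 = j.1 ∨ j.1 + 2 = i.1 then (1:k) else 0 :
      Matrix (Fin 4) (Fin 4) k) = !![0, 0, 1, 0; 0, 0, 0, 1; 1, 0, 0, 0; 0, 1, 0, 0] := by
    ext i j; fin_cases i <;> fin_cases j <;> rfl
  have he : e = !![0, 1, 1, 0; 0, 0, 0, 0; 0, 0, 0, 0; 0, 0, 1, 0] := by
    ext i j; fin_cases i <;> fin_cases j <;> simp [e]
  have he2 : e ^ 2 = 0 := by
    simp [e, sq, add_mul, mul_add, single_mul_single_of_ne]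
  refine ⟨(isSkewAdjoint_of_isSymm_of_isSymm_mul ?_ ?_).dotProduct_mulVec_add_dotProduct_mulVec,
    he2, le_antisymm ?_ ?_, ?_, fun v => by simp [B, he2]⟩
  · exact funext₂ fun i j => if_congr or_comm rfl rfl
  · rw [IsSymm, hJ, he]
    ext i j; fin_cases i <;> fin_cases j <;> simp [mul_apply, Fin.sum_univ_four]
  · have := two_mul_rank_le_of_sq_eq_zero he2
    simp only [Fintype.card_fin] at this
    omega
  · have hminor : e.submatrix ![0, 3] ![1, 2] = !![1, 1; 0, 1] := by
      rw [he]; ext i j; fin_cases i <;> fin_cases j <;> rfl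
    simpa using e.card_le_rank_of_isUnit_submatrix ![0, 3] ![1, 2]
      (by simp [hminor, isUnit_iff_isUnit_det, det_fin_two_of])
  · simp [B, he, mulVec, dotProduct, Fin.sum_univ_four]
end

section
/- Let k be a field of characteristic 2 and let u be the N×N upper unitriangular matrix over k defined as in Lemma (type D_n unipotent), for N = 2n, n ≥ 4, and (n+1)/2 < l ≤ n, by the rule: u(v_i) = v_i + v_{i-1} + ... + v_1 (1 ≤ i ≤ n), u(v_j) = v_j + v_{j+1} (n+1 ≤ j < 2n, j ≠ 2l-1), u(v_{2l-1}) = v_{2l-1} + v_{2l} + v_n + ... + v_1, u(v_{2n}) = v_{2n} + v_{2l-n-1} + ... + v_1. Then (u-1)^{2l-3}(v_{n+1}) = v_1 if 2l - 2 > n, and (u-1)^{2l-3}(v_{n+1}) = v_{2n} + v_2 + v_1 if 2l - 2 = n. -/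
open Matrix Finset

namespace Stmt17Aux

/-- hockey stick -/
lemma sum_range_choose_eq (t m : ℕ) : ∑ e ∈ range t, Nat.choose e m = t.choose (m+1) := by
  induction t with
  | zero => simp
  | succ t ih =>
    rw [Finset.sum_range_succ, ih, Nat.choose_succ_succ (t) (m), add_comm]

def entry (k : Type*) [Field k] (n l : ℕ) (i j : ℕ) : k :=
  (if j < n then (if i ≤ j then 1 else 0)
   else if j = 2*l-2 then (if i = 2*l-2 ∨ i = 2*l-1 ∨ i < n then 1 else 0)
   else if j = 2*n-1 then (if i = 2*n-1 ∨ i ≤ 2*l-n-2 then 1 else 0)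
   else (if i = j ∨ i = j+1 then 1 else 0)) - (if i = j then 1 else 0)

variable {k : Type*} [Field k] [CharP k 2] {n l : ℕ}

def wv (k : Type*) [Field k] (n : ℕ) (t : ℕ) : Fin (2*n) → k := fun i => if i.1 < t then 1 else 0

variable (X : Matrix (Fin (2*n)) (Fin (2*n)) k)
variable (hX : ∀ i j : Fin (2*n), X i j = entry k n l i.1 j.1)
variable (hn : 4 ≤ n) (hl1 : n + 1 < 2*l) (hl2 : l ≤ n)

include hX hn hl1 hl2 in
lemma shift (p : ℕ) (h1 : n ≤ p) (h2 : p ≠ 2*l-2) (h3 : p+1 < 2*n) :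
    X *ᵥ Pi.single (⟨p, by omega⟩ : Fin (2*n)) (1:k) = Pi.single (⟨p+1, h3⟩ : Fin (2*n)) 1 := by
  set j : Fin (2*n) := ⟨p, by omega⟩ with hjdef
  have hjv : j.1 = p := rfl
  funext i
  rw [mulVec_single]; simp only [Pi.smul_apply, Matrix.col_apply, op_smul_eq_mul]; rw [mul_one, hX, entry, Pi.single_apply]
  simp only [Fin.ext_iff, hjv]
  split_ifs <;> first | (exfalso; omega) | ring

include hX hn hl1 hl2 in
lemma col2l (j : Fin (2*n)) (hj : j.1 = 2*l-2) (hle : n ≤ 2*l-2) :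
    X *ᵥ Pi.single j (1:k) = Pi.single (⟨2*l-1, by omega⟩ : Fin (2*n)) 1 + wv k n n := by
  funext i
  rw [mulVec_single]; simp only [Pi.smul_apply, Matrix.col_apply, op_smul_eq_mul]; rw [mul_one, hX, entry, Pi.add_apply, Pi.single_apply]
  simp only [Fin.ext_iff, wv]
  split_ifs <;> first | (exfalso; omega) | ring

include hX hn hl1 hl2 in
lemma colLast (j : Fin (2*n)) (hj : j.1 = 2*n-1) :
    X *ᵥ Pi.single j (1:k) = wv k n (2*l-n-1) := by
  funext i
  rw [mulVec_single]; simp only [Pi.smul_apply, Matrix.col_apply, op_smul_eq_mul]; rw [mul_one, hX, entry]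
  simp only [Fin.ext_iff, wv]
  split_ifs <;> first | (exfalso; omega) | ring


include hX hn hl1 hl2 in
lemma powW (t : ℕ) (ht : t ≤ n) (m : ℕ) :
    (X ^ m) *ᵥ wv k n t = fun i => if i.1 < t then ((t-1-i.1).choose m : k) else 0 := by
  induction m with
  | zero =>
    rw [pow_zero, one_mulVec]
    funext i
    simp [wv]
  | succ m ih =>
    rw [pow_succ', ← mulVec_mulVec, ih]
    funext i
    simp only [mulVec, dotProduct]
    have hterm : ∀ j' : Fin (2*n),
        X i j' * (if j'.1 < t then ((t-1-j'.1).choose m : k) else 0)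
        = if i.1 < j'.1 ∧ j'.1 < t then ((t-1-j'.1).choose m : k) else 0 := by
      intro j'
      by_cases hjt : j'.1 < t
      · rw [hX, entry]
        split_ifs <;> first | (exfalso; omega) | ring
      · simp [hjt]
    rw [Finset.sum_congr rfl (fun j' _ => hterm j')]
    rw [Fin.sum_univ_eq_sum_range (fun d => if i.1 < d ∧ d < t then ((t-1-d).choose m : k) else 0)]
    rw [← Finset.sum_filter]
    have hfil : (Finset.range (2*n)).filter (fun d => i.1 < d ∧ d < t) = Finset.Ico (i.1+1) t := by
      ext d; simp only [Finset.mem_filter, Finset.mem_range, Finset.mem_Ico]; omega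
    rw [hfil, Finset.sum_Ico_eq_sum_range]
    by_cases hit : i.1 < t
    · rw [if_pos hit]
      have hre : ∀ e ∈ Finset.range (t - (i.1+1)), ((t-1-(i.1+1+e)).choose m : k)
          = (((t - (i.1+1)) - 1 - e).choose m : k) := by
        intro e he
        congr 2
        omega
      rw [Finset.sum_congr rfl hre]
      rw [← Nat.cast_sum]
      rw [Finset.sum_range_reflect (fun e => (Nat.choose e m)) (t - (i.1+1))]
      rw [sum_range_choose_eq]
      congr 2
      omega
    · rw [if_neg hit]
      have : t - (i.1+1) = 0 := by omega
      rw [this]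
      simp

include hX hn hl1 hl2 in
lemma shiftPow : ∀ (m p : ℕ) (hp : n ≤ p) (h2 : p + m + 1 ≤ 2*n)
    (h3 : 2*l-2 < p ∨ p + m ≤ 2*l-2),
    (X ^ m) *ᵥ Pi.single (⟨p, by omega⟩ : Fin (2*n)) (1:k) = Pi.single ⟨p+m, by omega⟩ 1 := by
  intro m
  induction m with
  | zero => intro p hp h2 h3; rw [pow_zero, one_mulVec]; rfl
  | succ m ih =>
    intro p hp h2 h3
    have hne : p ≠ 2*l-2 := by rcases h3 with h|h <;> omega
    have h3' : 2*l-2 < p+1 ∨ (p+1) + m ≤ 2*l-2 := by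
      rcases h3 with h|h
      · exact Or.inl (by omega)
      · exact Or.inr (by omega)
    rw [pow_succ, ← mulVec_mulVec]
    rw [shift X hX hn hl1 hl2 p hp hne (by omega)]
    rw [ih (p+1) (by omega) (by omega) h3']
    exact congrArg (fun q : Fin (2*n) => Pi.single q (1:k))
      (Fin.val_injective (show p+1+m = p+(m+1) by omega))


include hX hn hl1 hl2 in
lemma keyA (hA : n < 2*l-2) :
    (X ^ (2*l-3)) *ᵥ Pi.single (⟨n, by have := hl1; omega⟩ : Fin (2*n)) (1:k) = Pi.single ⟨0, by have := hl1; omega⟩ 1 := by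
  have h2k : (2:k) = 0 := by exact_mod_cast CharP.cast_eq_zero k 2
  rw [show 2*l-3 = (n-2) + 1 + (2*l-2-n) by omega, pow_add, pow_add, pow_one,
      ← mulVec_mulVec, ← mulVec_mulVec]
  rw [shiftPow X hX hn hl1 hl2 (2*l-2-n) n le_rfl (by omega) (Or.inr (by omega))]
  rw [col2l X hX hn hl1 hl2 ⟨n+(2*l-2-n), by omega⟩ (show n+(2*l-2-n) = 2*l-2 by omega) (by omega)]
  rw [mulVec_add]
  have e1 : (X^(n-2)) *ᵥ Pi.single (⟨2*l-1, by omega⟩ : Fin (2*n)) (1:k)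
      = fun i : Fin (2*n) => if i.1 < 2*l-n-1 then (((2*l-n-1)-1-i.1).choose (2*l-n-3) : k) else 0 := by
    rw [show n-2 = (2*l-n-3) + 1 + (2*n-2*l) by omega, pow_add, pow_add, pow_one,
        ← mulVec_mulVec, ← mulVec_mulVec]
    rw [shiftPow X hX hn hl1 hl2 (2*n-2*l) (2*l-1) (by omega) (by omega) (Or.inl (by omega))]
    rw [colLast X hX hn hl1 hl2 ⟨2*l-1+(2*n-2*l), by omega⟩ (show 2*l-1+(2*n-2*l) = 2*n-1 by omega)]
    rw [powW X hX hn hl1 hl2 (2*l-n-1) (by omega) (2*l-n-3)]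
  have e2 : (X^(n-2)) *ᵥ wv k n n
      = fun i : Fin (2*n) => if i.1 < n then ((n-1-i.1).choose (n-2) : k) else 0 :=
    powW X hX hn hl1 hl2 n le_rfl (n-2)
  rw [e1, e2]
  funext i
  obtain ⟨iv, hiv⟩ := i
  simp only [Pi.add_apply, Pi.single_apply, Fin.ext_iff, Fin.val_mk]
  rcases iv with _ | _ | iv
  · rw [if_pos (show (0:ℕ) < 2*l-n-1 by omega), if_pos (show 0 < n by omega),
        if_pos (rfl),
        show 2*l-n-1-1-0 = (2*l-n-3)+1 by omega, Nat.choose_succ_self_right,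
        show n-1-0 = (n-2)+1 by omega, Nat.choose_succ_self_right,
        ← Nat.cast_add, show (2*l-n-3+1) + ((n-2)+1) = 2*(l-2)+1 by omega]
    push_cast
    rw [h2k]; ring
  · rw [if_pos (show (1:ℕ) < 2*l-n-1 by omega), if_pos (show 1 < n by omega),
        if_neg (show ¬((1:ℕ) = 0) by omega),
        show 2*l-n-1-1-1 = 2*l-n-3 by omega, show n-1-1 = n-2 by omega,
        Nat.choose_self, Nat.choose_self, Nat.cast_one]
    rw [show (1:k) + 1 = 2 by ring, h2k]
  · rw [if_neg (show ¬(iv+1+1 = 0) by omega)]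
    have z1 : (if iv+1+1 < 2*l-n-1 then ((2*l-n-1-1-(iv+1+1)).choose (2*l-n-3) : k) else 0) = 0 := by
      split_ifs with h
      · rw [Nat.choose_eq_zero_of_lt (by omega), Nat.cast_zero]
      · rfl
    have z2 : (if iv+1+1 < n then ((n-1-(iv+1+1)).choose (n-2) : k) else 0) = 0 := by
      split_ifs with h
      · rw [Nat.choose_eq_zero_of_lt (by omega), Nat.cast_zero]
      · rfl
    rw [z1, z2, add_zero]


include hX hn hl1 hl2 in
lemma keyB (hB : 2*l-2 = n) :
    (X ^ (2*l-3)) *ᵥ Pi.single (⟨n, by have := hl1; omega⟩ : Fin (2*n)) (1:k)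
      = Pi.single (⟨2*n-1, by have := hl1; omega⟩ : Fin (2*n)) 1 + Pi.single ⟨1, by have := hl1; omega⟩ 1
        + Pi.single ⟨0, by have := hl1; omega⟩ 1 := by
  have h2k : (2:k) = 0 := by exact_mod_cast CharP.cast_eq_zero k 2
  rw [show 2*l-3 = (n-2) + 1 by omega, pow_add, pow_one, ← mulVec_mulVec]
  rw [col2l X hX hn hl1 hl2 ⟨n, by omega⟩ (show n = 2*l-2 by omega) (by omega)]
  rw [mulVec_add]
  rw [shiftPow X hX hn hl1 hl2 (n-2) (2*l-1) (by omega) (by omega) (Or.inl (by omega))]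
  rw [powW X hX hn hl1 hl2 n le_rfl (n-2)]
  funext i
  obtain ⟨iv, hiv⟩ := i
  simp only [Pi.add_apply, Pi.single_apply, Fin.ext_iff, Fin.val_mk]
  rcases iv with _ | _ | iv
  · rw [if_neg (show ¬((0:ℕ) = 2*l-1+(n-2)) by omega), if_pos (show 0 < n by omega),
        if_neg (show ¬((0:ℕ) = 2*n-1) by omega), if_neg (show ¬((0:ℕ) = 1) by omega),
        if_pos rfl,
        show n-1-0 = (n-2)+1 by omega, Nat.choose_succ_self_right,
        show (n-2)+1 = 2*(l-2)+1 by omega]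
    push_cast
    rw [h2k]; ring
  · rw [if_neg (show ¬((1:ℕ) = 2*l-1+(n-2)) by omega), if_pos (show 1 < n by omega),
        if_neg (show ¬((1:ℕ) = 2*n-1) by omega), if_pos rfl,
        if_neg (show ¬((1:ℕ) = 0) by omega),
        show n-1-1 = n-2 by omega, Nat.choose_self, Nat.cast_one]
    ring
  · have z2 : (if iv+1+1 < n then ((n-1-(iv+1+1)).choose (n-2) : k) else 0) = 0 := by
      split_ifs with h
      · rw [Nat.choose_eq_zero_of_lt (by omega), Nat.cast_zero]
      · rfl
    rw [z2, add_zero, if_neg (show ¬(iv+1+1 = 1) by omega), if_neg (show ¬(iv+1+1 = 0) by omega),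
        add_zero, add_zero]
    by_cases h : iv+1+1 = 2*l-1+(n-2)
    · rw [if_pos h, if_pos (by omega)]
    · rw [if_neg h, if_neg (by omega)]

end Stmt17Aux



theorem stmt_17 (k : Type*) [Field k] [CharP k 2] (n l : ℕ) (hn : 4 ≤ n)
    (hl1 : n + 1 < 2*l) (hl2 : l ≤ n) :
    let v : Fin (2*n) → (Fin (2*n) → k) := fun i => Pi.single i 1
    let U : Matrix (Fin (2*n)) (Fin (2*n)) k := fun i j =>
      if j.1 < n then (if i.1 ≤ j.1 then 1 else 0)
      else if j.1 = 2*l-2 then (if i.1 = 2*l-2 ∨ i.1 = 2*l-1 ∨ i.1 < n then 1 else 0)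
      else if j.1 = 2*n-1 then (if i.1 = 2*n-1 ∨ i.1 ≤ 2*l-n-2 then 1 else 0)
      else (if i = j ∨ i.1 = j.1+1 then 1 else 0)
    (2*l - 2 > n → ((U - 1) ^ (2*l-3)) *ᵥ v ⟨n, by omega⟩ = v ⟨0, by omega⟩) ∧
    (2*l - 2 = n → ((U - 1) ^ (2*l-3)) *ᵥ v ⟨n, by omega⟩ =
      v ⟨2*n-1, by omega⟩ + v ⟨1, by omega⟩ + v ⟨0, by omega⟩) := by
  intro v U
  have hX : ∀ i j : Fin (2*n), (U - 1) i j = Stmt17Aux.entry k n l i.1 j.1 := by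
    intro i j
    show U i j - (1 : Matrix (Fin (2*n)) (Fin (2*n)) k) i j = _
    rw [Matrix.one_apply, Stmt17Aux.entry]
    show (if j.1 < n then _ else _) - _ = _
    congr 1
    · congr 2
      simp [Fin.ext_iff]
    · simp [Fin.ext_iff]
  constructor
  · intro hA
    exact Stmt17Aux.keyA (U - 1) hX hn hl1 hl2 hA
  · intro hB
    exact Stmt17Aux.keyB (U - 1) hX hn hl1 hl2 hB
end
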